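/- arXiv:1102.2038 — 4 statements merged into one kernel-verified Lean document; each statement's English description precedes it below -/
import Mathlib

section
/- Let f(x₀,r) be a scalar-valued infinitely differentiable function on an open subset of ℝ² (variables x₀ and r, with r > 0). Then for every integer m ≥ 1, ∂_r² D_r(m){f} = D_r(m){∂_r² f} − 2m · D_r(m+1){f}. -/
/-!
For `D = (1/r) ∂_r` the Leibniz rule gives the commutator identity
`∂_r² (D g) = D (∂_r² g) - 2 D² g`, because `∂_r² (1/r) = 2/r³` and `2 ∂_r (1/r) = -2/r²`
are exactly the coefficients of `-2 D² g = 2 g'/r³ - 2 g''/r²`. Applying it to `g = D^m f`,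
the induction hypothesis and linearity of `D` turn `∂_r² D^{m+1} f` into
`D^{m+1} (∂_r² f) - 2m D^{m+2} f - 2 D^{m+2} f`.
-/

noncomputable section

/-- Partial derivative with respect to the second variable `r` of a function on `ℝ²`. -/
def pr2 (g : ℝ × ℝ → ℝ) (p : ℝ × ℝ) : ℝ := fderiv ℝ g p (0, 1)

/-- The operator `D_r(m) = ((1/r) ∂_r)^m`. -/
def DrOp : ℕ → (ℝ × ℝ → ℝ) → (ℝ × ℝ → ℝ)
  | 0, f => f
  | m + 1, f => fun p => (1 / p.2) * pr2 (DrOp m f) p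

/-- The operator `D^r(m)`, defined by `D^r(0){f} = f` and `D^r(m){f} = ∂_r (D^r(m-1){f} / r)`. -/
def DRop : ℕ → (ℝ × ℝ → ℝ) → (ℝ × ℝ → ℝ)
  | 0, f => f
  | m + 1, f => fun p => pr2 (fun q => DRop m f q / q.2) p

theorem Set.EqOn.pr2_eq {U : Set (ℝ × ℝ)} {a b : ℝ × ℝ → ℝ} (h : EqOn a b U) (hU : IsOpen U)
    {p : ℝ × ℝ} (hp : p ∈ U) : pr2 a p = pr2 b p := by
  rw [pr2, pr2, (Filter.eventuallyEq_of_mem (hU.mem_nhds hp) h).fderiv_eq]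

theorem pr2_add {a b : ℝ × ℝ → ℝ} {p : ℝ × ℝ} (ha : DifferentiableAt ℝ a p)
    (hb : DifferentiableAt ℝ b p) : pr2 (fun q => a q + b q) p = pr2 a p + pr2 b p := by
  simp only [pr2, fderiv_fun_add ha hb, add_apply]

theorem pr2_sub {a b : ℝ × ℝ → ℝ} {p : ℝ × ℝ} (ha : DifferentiableAt ℝ a p)
    (hb : DifferentiableAt ℝ b p) : pr2 (fun q => a q - b q) p = pr2 a p - pr2 b p := by
  simp only [pr2, fderiv_fun_sub ha hb, sub_apply]

theorem pr2_const_mul {a : ℝ × ℝ → ℝ} {p : ℝ × ℝ} (ha : DifferentiableAt ℝ a p) (c : ℝ) :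
    pr2 (fun q => c * a q) p = c * pr2 a p := by
  simp only [pr2, fderiv_const_mul ha c, smul_apply, smul_eq_mul]

theorem pr2_comp_snd_mul {c : ℝ → ℝ} {c' : ℝ} {h : ℝ × ℝ → ℝ} {p : ℝ × ℝ}
    (hc : HasDerivAt c c' p.2) (hh : DifferentiableAt ℝ h p) :
    pr2 (fun q => c q.2 * h q) p = c' * h p + c p.2 * pr2 h p := by
  have hc₂ : HasFDerivAt (fun q : ℝ × ℝ => c q.2) (c' • ContinuousLinearMap.snd ℝ ℝ ℝ) p :=
    hc.comp_hasFDerivAt p hasFDerivAt_snd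
  simp only [pr2, fderiv_fun_mul hc₂.differentiableAt hh, hc₂.fderiv,
    add_apply, smul_apply, smul_eq_mul, ContinuousLinearMap.coe_snd']
  ring

theorem ContDiffOn.pr2 {U : Set (ℝ × ℝ)} {g : ℝ × ℝ → ℝ} {m n : WithTop ℕ∞}
    (hg : ContDiffOn ℝ n g U) (hU : IsOpen U) (hmn : m + 1 ≤ n) : ContDiffOn ℝ m (pr2 g) U :=
  (hg.fderiv_of_isOpen hU hmn).clm_apply contDiffOn_const

theorem pr2_pr2_comp_snd_mul {U : Set (ℝ × ℝ)} {c c' c'' : ℝ → ℝ} {h : ℝ × ℝ → ℝ}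
    (hU : IsOpen U) (hc : ∀ q ∈ U, HasDerivAt c (c' q.2) q.2)
    (hc' : ∀ q ∈ U, HasDerivAt c' (c'' q.2) q.2) (hh : ContDiffOn ℝ 2 h U)
    {p : ℝ × ℝ} (hp : p ∈ U) :
    pr2 (pr2 (fun q => c q.2 * h q)) p
      = c'' p.2 * h p + 2 * c' p.2 * pr2 h p + c p.2 * pr2 (pr2 h) p := by
  have hdiff : ∀ {g : ℝ × ℝ → ℝ}, ContDiffOn ℝ 1 g U → ∀ q ∈ U, DifferentiableAt ℝ g q :=
    fun hg q hq => (hg.differentiableOn one_ne_zero).differentiableAt (hU.mem_nhds hq)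
  have hh' : ∀ q ∈ U, DifferentiableAt ℝ h q := hdiff (hh.of_le (by norm_num))
  have hh'' : DifferentiableAt ℝ (pr2 h) p := hdiff (hh.pr2 hU (by norm_num)) p hp
  have hcomp : ∀ {d d' : ℝ → ℝ}, (∀ q ∈ U, HasDerivAt d (d' q.2) q.2) →
      DifferentiableAt ℝ (fun q : ℝ × ℝ => d q.2) p := fun hd =>
    (hd p hp).differentiableAt.comp p differentiableAt_snd
  rw [Set.EqOn.pr2_eq (fun q hq => pr2_comp_snd_mul (hc q hq) (hh' q hq)) hU hp,
    pr2_add ((hcomp hc').fun_mul (hh' p hp)) ((hcomp hc).fun_mul hh''),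
    pr2_comp_snd_mul (hc' p hp) (hh' p hp), pr2_comp_snd_mul (hc p hp) hh'']
  ring

theorem DrOp_add (f : ℝ × ℝ → ℝ) (m : ℕ) : ∀ n, DrOp (m + n) f = DrOp n (DrOp m f)
  | 0 => rfl
  | n + 1 => funext fun p => congrArg (fun g => 1 / p.2 * pr2 g p) (DrOp_add f m n)

theorem contDiffOn_DrOp {U : Set (ℝ × ℝ)} {f : ℝ × ℝ → ℝ} (hU : IsOpen U)
    (hUpos : U ⊆ {p : ℝ × ℝ | 0 < p.2}) (hf : ContDiffOn ℝ (⊤ : ℕ∞) f U) :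
    ∀ m, ContDiffOn ℝ (⊤ : ℕ∞) (DrOp m f) U
  | 0 => hf
  | m + 1 => by
    have hinv : ContDiffOn ℝ (⊤ : ℕ∞) (fun p : ℝ × ℝ => 1 / p.2) U :=
      contDiffOn_const.div contDiff_snd.contDiffOn fun p hp => (hUpos hp).ne'
    exact hinv.mul ((contDiffOn_DrOp hU hUpos hf m).pr2 (m := (⊤ : ℕ∞)) hU (by simp))

theorem hasDerivAt_one_div {x : ℝ} (hx : x ≠ 0) :
    HasDerivAt (fun y => 1 / y) (-(1 / x ^ 2)) x := by
  simpa only [one_div] using hasDerivAt_inv hx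

theorem hasDerivAt_neg_one_div_sq {x : ℝ} (hx : x ≠ 0) :
    HasDerivAt (fun y => -(1 / y ^ 2)) (2 / x ^ 3) x := by
  simp only [one_div]
  refine ((hasDerivAt_pow 2 x).fun_inv (pow_ne_zero 2 hx)).fun_neg.congr_deriv ?_
  field_simp
  ring

theorem pr2_pr2_DrOp_one {U : Set (ℝ × ℝ)} {g : ℝ × ℝ → ℝ} (hU : IsOpen U)
    (hUpos : U ⊆ {p : ℝ × ℝ | 0 < p.2}) (hg : ContDiffOn ℝ 3 g U) {p : ℝ × ℝ} (hp : p ∈ U) :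
    pr2 (pr2 (DrOp 1 g)) p = DrOp 1 (pr2 (pr2 g)) p - 2 * DrOp 2 g p := by
  have hne : p.2 ≠ 0 := (hUpos hp).ne'
  have hg' : ContDiffOn ℝ 2 (pr2 g) U := hg.pr2 hU (by norm_num)
  have hDr2 : DrOp 2 g p = 1 / p.2 * pr2 (fun q => 1 / q.2 * pr2 g q) p := rfl
  rw [hDr2, pr2_comp_snd_mul (hasDerivAt_one_div hne)
      ((hg'.differentiableOn (by norm_num)).differentiableAt (hU.mem_nhds hp)),
    show DrOp 1 g = fun q => 1 / q.2 * pr2 g q from rfl,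
    pr2_pr2_comp_snd_mul (c' := fun y => -(1 / y ^ 2)) (c'' := fun y => 2 / y ^ 3) hU
      (fun q hq => hasDerivAt_one_div (hUpos hq).ne')
      (fun q hq => hasDerivAt_neg_one_div_sq (hUpos hq).ne') hg' hp]
  simp only [DrOp]
  field_simp
  ring

theorem partial_r_sq_DrOp_general (f : ℝ × ℝ → ℝ) (U : Set (ℝ × ℝ)) (hU : IsOpen U)
    (hUpos : U ⊆ {p : ℝ × ℝ | 0 < p.2}) (hf : ContDiffOn ℝ (⊤ : ℕ∞) f U)
    (m : ℕ) :
    ∀ p ∈ U, pr2 (pr2 (DrOp m f)) p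
      = DrOp m (fun q => pr2 (pr2 f) q) p - 2 * (m : ℝ) * DrOp (m + 1) f p := by
  induction m with
  | zero => intro p _; simp [DrOp]
  | succ m ih =>
    intro p hp
    have hdiff : ∀ {g : ℝ × ℝ → ℝ}, ContDiffOn ℝ (⊤ : ℕ∞) g U → DifferentiableAt ℝ g p :=
      fun hg => (hg.differentiableOn (by simp)).differentiableAt (hU.mem_nhds hp)
    have hf'' : ContDiffOn ℝ (⊤ : ℕ∞) (pr2 (pr2 f)) U :=
      (hf.pr2 (m := (⊤ : ℕ∞)) hU (by simp)).pr2 hU (by simp)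
    calc pr2 (pr2 (DrOp (m + 1) f)) p
        = DrOp 1 (pr2 (pr2 (DrOp m f))) p - 2 * DrOp 2 (DrOp m f) p := by
          rw [DrOp_add]
          exact pr2_pr2_DrOp_one hU hUpos ((contDiffOn_DrOp hU hUpos hf m).of_le (by norm_cast)) hp
      _ = 1 / p.2 * pr2 (fun q => DrOp m (pr2 (pr2 f)) q - 2 * m * DrOp (m + 1) f q) p
            - 2 * DrOp (m + 2) f p := by
          change 1 / p.2 * pr2 (pr2 (pr2 (DrOp m f))) p - _ = _
          rw [Set.EqOn.pr2_eq (fun q hq => ih q hq) hU hp, DrOp_add f m 2]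
      _ = _ := by
          rw [pr2_sub (hdiff (contDiffOn_DrOp hU hUpos hf'' m))
              ((hdiff (contDiffOn_DrOp hU hUpos hf (m + 1))).const_mul _),
            pr2_const_mul (hdiff (contDiffOn_DrOp hU hUpos hf (m + 1)))]
          simp only [DrOp]
          push_cast
          ring

/-- Lemma 3.1 (i): `∂_r² D_r(m){f} = D_r(m){∂_r² f} − 2m · D_r(m+1){f}`. -/
theorem partial_r_sq_DrOp (f : ℝ × ℝ → ℝ) (U : Set (ℝ × ℝ)) (hU : IsOpen U)
    (hUpos : U ⊆ {p : ℝ × ℝ | 0 < p.2}) (hf : ContDiffOn ℝ (⊤ : ℕ∞) f U)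
    (m : ℕ) (hm : 1 ≤ m) :
    ∀ p ∈ U, pr2 (pr2 (DrOp m f)) p
      = DrOp m (fun q => pr2 (pr2 f) q) p - 2 * (m : ℝ) * DrOp (m + 1) f p :=
  partial_r_sq_DrOp_general f U hU hUpos hf m
end
end

section
/- Let f(x₀,r) be a scalar-valued infinitely differentiable function on an open subset of ℝ² (variables x₀ and r, with r > 0). Then for every integer m ≥ 1, D^r(m){∂_r f} = ∂_r D_r(m){f}. -/
noncomputable section

/-- Both sides of the inductive step are `∂_r` of the same function, since `g / r = (1 / r) * g`
holds pointwise (also at `r = 0`, where both sides are `0`); so the identity holds everywhere. -/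
theorem DRop_pr2 (f : ℝ × ℝ → ℝ) : ∀ m : ℕ, DRop m (pr2 f) = pr2 (DrOp m f)
  | 0 => rfl
  | m + 1 => by
    funext p
    change pr2 (fun q => DRop m (pr2 f) q / q.2) p = pr2 (fun q => 1 / q.2 * pr2 (DrOp m f) q) p
    rw [DRop_pr2 f m]
    simp only [one_div_mul_eq_div]

theorem DRop_partial_r_general (f : ℝ × ℝ → ℝ) (U : Set (ℝ × ℝ))
    (m : ℕ) :
    ∀ p ∈ U, DRop m (fun q => pr2 f q) p = pr2 (DrOp m f) p := by
  intro p _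
  exact congrFun (DRop_pr2 f m) p

/-- Lemma 3.1 (iii): `D^r(m){∂_r f} = ∂_r D_r(m){f}`. -/
theorem DRop_partial_r (f : ℝ × ℝ → ℝ) (U : Set (ℝ × ℝ)) (hU : IsOpen U)
    (hUpos : U ⊆ {p : ℝ × ℝ | 0 < p.2}) (hf : ContDiffOn ℝ (⊤ : ℕ∞) f U)
    (m : ℕ) (hm : 1 ≤ m) :
    ∀ p ∈ U, DRop m (fun q => pr2 f q) p = pr2 (DrOp m f) p :=
  DRop_partial_r_general f U m
end
end

section
/- (Spherical form of the Dunkl-Dirac operator.) In spherical coordinates r = |x̲| and ω̲ = x̲/|x̲| for x̲ ∈ ℝ^d ∖ {0}, the Dunkl-Dirac operator has the form D̲ = ω̲ (∂_r + (1/r) Γ_ω̲), where Γ_ω̲ = γ_κ + Φ_ω̲ + Ψ, with Φ_ω̲ = −Σ_{i<j} e_i e_j (x_i ∂_{x_j} − x_j ∂_{x_i}) and, for any f ∈ C¹(ℝ^d), Ψ f(x̲) = −Σ_{i<j} e_i e_j Σ_{α̲∈R₊} κ(α̲) [ (f(x̲) − f(σ_α̲ x̲)) / ⟨α̲, x̲⟩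 ] (x_i α_j − x_j α_i) − Σ_{α̲∈R₊} κ(α̲) f(σ_α̲ x̲). That is, for every f ∈ C¹(ℝ^d) and every x̲ ≠ 0, D̲f(x̲) = ω̲ ( ∂_r f + (1/r) Γ_ω̲ f )(x̲). -/
open scoped BigOperators RealInnerProductSpace

noncomputable section

/-- Euclidean space `ℝ^d`. -/
abbrev Vd (d : ℕ) := EuclideanSpace ℝ (Fin d)

/-- The reflection `σ_a x = x − 2(⟪a,x⟫/|a|²) a` in the hyperplane orthogonal to `a`. -/
def reflect {d : ℕ} (a x : Vd d) : Vd d := x - ((2 * ⟪a, x⟫) / ⟪a, a⟫) • a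

/-- A finite root system `R` with a choice of positive subsystem `Rp` and a `W`-invariant
multiplicity function `kap`. -/
structure DunklData (d : ℕ) where
  R : Finset (Vd d)
  Rp : Finset (Vd d)
  kap : Vd d → ℝ
  zero_not_mem : (0 : Vd d) ∉ R
  inter_line : ∀ a ∈ R, ∀ c : ℝ, c • a ∈ R → c = 1 ∨ c = -1
  reflect_mem : ∀ a ∈ R, ∀ b ∈ R, reflect a b ∈ R
  Rp_subset : Rp ⊆ R
  pos_split : ∀ a ∈ R, Xor' (a ∈ Rp) (-a ∈ Rp)
  kap_nonneg : ∀ a ∈ R, 0 ≤ kap a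
  kap_invariant : ∀ a ∈ R, ∀ b ∈ R, kap (reflect a b) = kap b

/-- The index `γ_κ = Σ_{α ∈ R₊} κ(α)`. -/
def gam {d : ℕ} (S : DunklData d) : ℝ := ∑ a ∈ S.Rp, S.kap a

/-- The Dunkl dimension `μ = 2γ_κ + d`. -/
def dunklDim {d : ℕ} (S : DunklData d) : ℝ := 2 * gam S + d

variable {d : ℕ} {A : Type*} [NormedRing A] [NormedAlgebra ℝ A]

/-- The Clifford algebra relations `e_i e_j + e_j e_i = −2δ_{ij}` for the generators of
`ℝ_{0,d}`, together with linear independence of the basis products `e_A`. -/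
def CliffordRel (e : Fin d → A) : Prop :=
  (∀ i j, e i * e j + e j * e i = if i = j then (-2 : A) else 0) ∧
    LinearIndependent ℝ (fun s : Finset (Fin d) => ((s.sort (· ≤ ·)).map e).prod)

/-- The Clifford vector `x̲ = Σ x_i e_i` associated to `x ∈ ℝ^d`. -/
def vecC (e : Fin d → A) (x : Vd d) : A := ∑ i, x i • e i

/-- The Dunkl difference quotient `(f(x) − f(σ_a x)) / ⟪a, x⟫`, extended by continuity
(for differentiable `f`) across the hyperplane `⟪a, x⟫ = 0`. -/
def dQuot (a : Vd d) (f : Vd d → A) (x : Vd d) : A :=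
  if ⟪a, x⟫ = 0 then (2 / ⟪a, a⟫) • fderiv ℝ f x a
  else (⟪a, x⟫)⁻¹ • (f x - f (reflect a x))

/-- The Dunkl operator `T_{x_i}` on `ℝ^d`. -/
def dunklT (S : DunklData d) (i : Fin d) (f : Vd d → A) (x : Vd d) : A :=
  fderiv ℝ f x (EuclideanSpace.single i 1) + ∑ a ∈ S.Rp, (S.kap a * a i) • dQuot a f x

/-- The Dunkl-Dirac operator `D̲ = Σ e_i T_{x_i}` on `ℝ^d`. -/
def diracD (e : Fin d → A) (S : DunklData d) (f : Vd d → A) (x : Vd d) : A :=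
  ∑ i, e i * dunklT S i f x

/-- The angular derivative operator `Φ_ω = −Σ_{i<j} e_i e_j (x_i ∂_{x_j} − x_j ∂_{x_i})`. -/
def PhiOp (e : Fin d → A) (f : Vd d → A) (x : Vd d) : A :=
  -∑ i, ∑ j ∈ Finset.Ioi i, e i * e j *
    (x i • fderiv ℝ f x (EuclideanSpace.single j 1)
      - x j • fderiv ℝ f x (EuclideanSpace.single i 1))

/-- The difference part `Ψ` of the spherical Dunkl-Gamma operator. -/
def PsiOp (e : Fin d → A) (S : DunklData d) (f : Vd d → A) (x : Vd d) : A :=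
  (-∑ i, ∑ j ∈ Finset.Ioi i, e i * e j *
      (∑ a ∈ S.Rp, (S.kap a * (x i * a j - x j * a i)) • dQuot a f x))
    - ∑ a ∈ S.Rp, S.kap a • f (reflect a x)

/-- The spherical Dunkl-Gamma operator `Γ_ω = γ_κ + Φ_ω + Ψ`. -/
def GammaOp (e : Fin d → A) (S : DunklData d) (f : Vd d → A) (x : Vd d) : A :=
  gam S • f x + PhiOp e f x + PsiOp e S f x

/-!
Multiply `D̲ f` on the left by `x̲`. By the Clifford relations the double sum
`x̲ D̲ = Σᵢⱼ xᵢ eᵢ eⱼ T_{x_j}` splits into a scalar part `−Σᵢ xᵢ T_{x_i}` and a bivector part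
`Σ_{i<j} eᵢ eⱼ (xᵢ T_{x_j} − xⱼ T_{x_i})`. Euler's identity `Σᵢ xᵢ ∂ᵢ f = r ∂_r f` and
`⟪α, x⟫ · (f(x) − f(σ_α x)) / ⟪α, x⟫ = f(x) − f(σ_α x)` turn the scalar part into
`−(r ∂_r + γ_κ − Σ κ(α) f(σ_α x))`, and the bivector part is `−(Φ_ω + the rest of Ψ)`, so
`x̲ D̲ f = −r (∂_r f + Γ_ω f / r)`. Since `ω² = −1`, `D̲ f = ω (−ω D̲ f)` gives the claim.
-/

section CliffordGenerators

variable {B ι : Type*} [Ring B] [DecidableEq ι] {e : ι → B}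

lemma clifford_gen_mul_self [Algebra ℝ B]
    (hrel : ∀ i j, e i * e j + e j * e i = if i = j then (-2 : B) else 0) (i : ι) :
    e i * e i = -1 := by
  have h : (2 : ℝ) • (e i * e i) = (2 : ℝ) • (-1 : B) := by
    rw [two_smul, two_smul, hrel, if_pos rfl]
    norm_num
  exact smul_right_injective B two_ne_zero h

lemma clifford_gen_mul_comm_of_ne
    (hrel : ∀ i j, e i * e j + e j * e i = if i = j then (-2 : B) else 0) {i j : ι}
    (hij : i ≠ j) : e j * e i = -(e i * e j) :=
  eq_neg_of_add_eq_zero_right (by rw [hrel, if_neg hij])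

end CliffordGenerators

lemma Finset.sum_sum_eq_sum_diag_add_sum_Ioi {n : ℕ} {M : Type*} [AddCommMonoid M]
    (g : Fin n → Fin n → M) :
    ∑ i, ∑ j, g i j = ∑ i, g i i + ∑ i, ∑ j ∈ Finset.Ioi i, (g i j + g j i) := by
  rw [Finset.sum_sum_Ioi_add_eq_sum_sum_off_diag (fun a b => g b a), ← Finset.sum_add_distrib]
  refine Finset.sum_congr rfl fun i _ => ?_
  rw [add_comm, ← Finset.sum_compl_add_sum {i} (g i), Finset.sum_singleton]

lemma EuclideanSpace.sum_smul_apply_single {M F : Type*} [AddCommGroup M] [Module ℝ M]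
    [FunLike F (Vd d) M] [LinearMapClass F ℝ (Vd d) M] (L : F) (x : Vd d) :
    ∑ i, x i • L (EuclideanSpace.single i 1) = L x := by
  conv_rhs => rw [← (EuclideanSpace.basisFun (Fin d) ℝ).sum_repr x]
  simp [map_sum, map_smul]

section CliffordVector

variable {e : Fin d → A}

lemma vecC_mul_sum_mul
    (hrel : ∀ i j, e i * e j + e j * e i = if i = j then (-2 : A) else 0)
    (x : Vd d) (u : Fin d → A) :
    vecC e x * ∑ j, e j * u j =
      -∑ i, x i • u i + ∑ i, ∑ j ∈ Finset.Ioi i, e i * e j * (x i • u j - x j • u i) := by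
  rw [vecC, Finset.sum_mul_sum]
  simp only [smul_mul_assoc]
  rw [Finset.sum_sum_eq_sum_diag_add_sum_Ioi, ← Finset.sum_neg_distrib]
  congr 1
  · refine Finset.sum_congr rfl fun i _ => ?_
    rw [← mul_assoc, clifford_gen_mul_self hrel, neg_one_mul, smul_neg]
  · refine Finset.sum_congr rfl fun i _ => Finset.sum_congr rfl fun j hj => ?_
    have hij : i ≠ j := (Finset.mem_Ioi.mp hj).ne
    rw [← mul_assoc, ← mul_assoc, clifford_gen_mul_comm_of_ne hrel hij, mul_sub,
      mul_smul_comm, mul_smul_comm, neg_mul, smul_neg, sub_eq_add_neg]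

lemma vecC_mul_self
    (hrel : ∀ i j, e i * e j + e j * e i = if i = j then (-2 : A) else 0) (x : Vd d) :
    vecC e x * vecC e x = -(‖x‖ ^ 2 • 1 : A) := by
  have hvec : vecC e x = ∑ j, e j * (x j • 1 : A) := by
    simp only [vecC, mul_smul_comm, mul_one]
  nth_rewrite 2 [hvec]
  rw [vecC_mul_sum_mul hrel]
  simp only [smul_smul, mul_comm (x _) (x _), sub_self, mul_zero, Finset.sum_const_zero,
    add_zero, ← Finset.sum_smul]
  rw [EuclideanSpace.real_norm_sq_eq]
  simp only [sq]

lemma inv_norm_smul_vecC_mul_self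
    (hrel : ∀ i j, e i * e j + e j * e i = if i = j then (-2 : A) else 0) {x : Vd d}
    (hx : x ≠ 0) : (‖x‖⁻¹ • vecC e x) * (‖x‖⁻¹ • vecC e x) = -1 := by
  rw [smul_mul_smul_comm, vecC_mul_self hrel, smul_neg, smul_smul]
  field_simp [norm_ne_zero_iff.mpr hx]
  simp

end CliffordVector

section DunklOperators

variable (S : DunklData d) (f : Vd d → A) (x : Vd d)

lemma inner_smul_dQuot (a : Vd d) : ⟪a, x⟫ • dQuot a f x = f x - f (reflect a x) := by
  by_cases h : ⟪a, x⟫ = 0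
  · simp [dQuot, reflect, h]
  · rw [dQuot, if_neg h, smul_smul, mul_inv_cancel₀ h, one_smul]

lemma sum_smul_dunklT :
    ∑ i, x i • dunklT S i f x =
      fderiv ℝ f x x + gam S • f x - ∑ a ∈ S.Rp, S.kap a • f (reflect a x) := by
  have hroot : ∀ a ∈ S.Rp, ∑ i, (x i * (S.kap a * a i)) • dQuot a f x =
      S.kap a • f x - S.kap a • f (reflect a x) := by
    intro a _
    have hinner : ∑ i, x i * (S.kap a * a i) = S.kap a * ⟪a, x⟫ := by
      simp only [PiLp.inner_apply, RCLike.inner_apply, conj_trivial, Finset.mul_sum]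
      exact Finset.sum_congr rfl fun i _ => by ring
    rw [← Finset.sum_smul, hinner, mul_smul, inner_smul_dQuot, smul_sub]
  simp only [dunklT, smul_add, Finset.smul_sum, smul_smul]
  rw [Finset.sum_add_distrib, EuclideanSpace.sum_smul_apply_single,
    Finset.sum_comm, Finset.sum_congr rfl hroot, Finset.sum_sub_distrib, ← Finset.sum_smul, gam]
  abel

lemma smul_dunklT_sub_smul_dunklT (i j : Fin d) :
    x i • dunklT S j f x - x j • dunklT S i f x =
      (x i • fderiv ℝ f x (EuclideanSpace.single j 1)
          - x j • fderiv ℝ f x (EuclideanSpace.single i 1))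
        + ∑ a ∈ S.Rp, (S.kap a * (x i * a j - x j * a i)) • dQuot a f x := by
  simp only [dunklT, smul_add, Finset.smul_sum, smul_smul, mul_sub, sub_smul,
    Finset.sum_sub_distrib]
  simp only [mul_left_comm (x _)]
  abel

lemma vecC_mul_diracD {e : Fin d → A}
    (hrel : ∀ i j, e i * e j + e j * e i = if i = j then (-2 : A) else 0) :
    vecC e x * diracD e S f x = -fderiv ℝ f x x - GammaOp e S f x := by
  rw [diracD, vecC_mul_sum_mul hrel, sum_smul_dunklT]
  simp only [smul_dunklT_sub_smul_dunklT, mul_add, Finset.sum_add_distrib, GammaOp, PhiOp, PsiOp]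
  abel

end DunklOperators

theorem diracD_spherical_general (d : ℕ) (A : Type*) [NormedRing A] [NormedAlgebra ℝ A]
    (e : Fin d → A) (he : CliffordRel e) (S : DunklData d)
    (f : Vd d → A) (x : Vd d) (hx : x ≠ 0) :
    diracD e S f x =
      (‖x‖⁻¹ • vecC e x) *
        (fderiv ℝ f x (‖x‖⁻¹ • x) + ‖x‖⁻¹ • GammaOp e S f x) := by
  set ω := ‖x‖⁻¹ • vecC e x
  have hω : ω * ω = -1 := inv_norm_smul_vecC_mul_self he.1 hx
  calc diracD e S f x = -(ω * ω) * diracD e S f x := by rw [hω, neg_neg, one_mul]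
    _ = ω * -(ω * diracD e S f x) := by noncomm_ring
    _ = ω * (fderiv ℝ f x (‖x‖⁻¹ • x) + ‖x‖⁻¹ • GammaOp e S f x) := by
      congr 1
      rw [smul_mul_assoc, vecC_mul_diracD S f x he.1, map_smul]
      module

/-- Proposition 2.1: in spherical coordinates `r = |x̲|`, `ω = x̲/|x̲|`, the Dunkl-Dirac
operator takes the form `D̲ = ω (∂_r + (1/r) Γ_ω)`. -/
theorem diracD_spherical (d : ℕ) (A : Type*) [NormedRing A] [NormedAlgebra ℝ A]
    (e : Fin d → A) (he : CliffordRel e) (S : DunklData d) (hγ : 0 < gam S)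
    (f : Vd d → A) (hf : ContDiff ℝ 1 f) (x : Vd d) (hx : x ≠ 0) :
    diracD e S f x =
      (‖x‖⁻¹ • vecC e x) *
        (fderiv ℝ f x (‖x‖⁻¹ • x) + ‖x‖⁻¹ • GammaOp e S f x) :=
  diracD_spherical_general d A e he S f x hx
end
end

section
/- (Almasi–Fischer decomposition.) For every n ∈ ℕ, the space P(n) of ℝ_{0,d}-valued homogeneous polynomials of degree n on ℝ^d decomposes as the direct sum P(n) = ⊕_{k=0}^n x̲^k M(n−k), where M(n−k) is the space of homogeneous Dunkl-monogenic polynomials of degree n−k and x̲^k M(n−k) = { x̲ ↦ x̲^k Q(x̲) : Q ∈ M(n−k) }, with x̲^k the k-th Clifford power of the vector x̲. -/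
open scoped BigOperators RealInnerProductSpace

noncomputable section

variable {d : ℕ} {A : Type*} [NormedRing A] [NormedAlgebra ℝ A]

/-!
The key identity is `D̲(x̲ f) = -(2m + μ) f - x̲ D̲ f` for `f` homogeneous of degree `m`, where
`μ = 2γ_κ + d`. It combines the Clifford relation `e_i x̲ + x̲ e_i = -2 x_i`, the Dunkl–Euler
identity `Σ x_i T_i f = E f + Σ_α κ(α) (f - f ∘ σ_α)` and `α̲² = -|α|²`. Iterating it gives
`D̲(x̲^(k+1) Q) = c_{k+1} x̲^k Q` for `Q ∈ M(m)`, with `c_{k+1} ≠ 0` because `μ > 0`.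

Uniqueness: applying `D̲` to `Σ_k x̲^k Q_k = 0` gives `Σ_k c_{k+1} x̲^k Q_{k+1} = 0`, so by
induction `Q_k = 0` for `k ≥ 1`, and then `Q_0 = 0`. Existence, by induction on `n`: decompose
`D̲P = Σ x̲^k q_k`; then `P - Σ x̲^(k+1) q_k / c_{k+1}` is monogenic.

For the induction, `D̲P` must again be smooth and homogeneous. Writing `P` as the diagonal of the
multilinear map `P^{(n)}(0) / n!`, the difference quotients become explicit by telescoping, which
shows that they are smooth; homogeneity for `c ≠ 0` is a rescaling, and at `c = 0` continuity.
-/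

lemma DunklData.inner_self_ne_zero (S : DunklData d) {a : Vd d} (ha : a ∈ S.Rp) : ⟪a, a⟫ ≠ 0 :=
  _root_.inner_self_ne_zero.mpr fun h => S.zero_not_mem (h ▸ S.Rp_subset ha)

namespace AlmasiFischer

section Homogeneous

variable {E F : Type*} [NormedAddCommGroup E] [NormedSpace ℝ E] [NormedAddCommGroup F]
  [NormedSpace ℝ F] {n : ℕ} {f : E → F}

def IsHomogeneous (n : ℕ) (f : E → F) : Prop :=
  ∀ (c : ℝ) (x : E), f (c • x) = c ^ n • f x

lemma isHomogeneous_of_ne_zero (hf : Continuous f)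
    (h : ∀ c : ℝ, c ≠ 0 → ∀ x, f (c • x) = c ^ n • f x) : IsHomogeneous n f := fun c x =>
  congrFun (Continuous.ext_on (dense_compl_singleton (0 : ℝ)) (by fun_prop) (by fun_prop)
    fun t ht => h t ht x) c

lemma IsHomogeneous.sub {g : E → F} (hf : IsHomogeneous n f) (hg : IsHomogeneous n g) :
    IsHomogeneous n fun y => f y - g y := fun c x => by
  dsimp only
  rw [hf, hg, smul_sub]

lemma IsHomogeneous.const_smul (hf : IsHomogeneous n f) (r : ℝ) :
    IsHomogeneous n fun y => r • f y := fun c x => by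
  dsimp only
  rw [hf, smul_comm]

lemma isHomogeneous_sum {ι : Type*} (s : Finset ι) {f : ι → E → F}
    (hf : ∀ i ∈ s, IsHomogeneous n (f i)) : IsHomogeneous n fun y => ∑ i ∈ s, f i y :=
  fun c x => by
    rw [Finset.smul_sum]
    exact Finset.sum_congr rfl fun i hi => hf i hi c x

lemma IsHomogeneous.fderiv_apply_self (hh : IsHomogeneous n f) {x : E}
    (hf : DifferentiableAt ℝ f x) : fderiv ℝ f x x = (n : ℝ) • f x := by
  have hline : HasDerivAt (fun t : ℝ => f (t • x)) (fderiv ℝ f x x) 1 := by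
    have := hf.hasFDerivAt.comp_hasDerivAt_of_eq (1 : ℝ) ((hasDerivAt_id (1 : ℝ)).smul_const x)
      (by simp)
    simpa [Function.comp_def] using this
  have hpow : HasDerivAt (fun t : ℝ => t ^ n • f x) ((n : ℝ) • f x) 1 := by
    simpa using (hasDerivAt_pow n (1 : ℝ)).smul_const (f x)
  simp_rw [hh _ x] at hline
  exact hline.unique hpow

lemma IsHomogeneous.fderiv (hh : IsHomogeneous (n + 1) f) (hf : ContDiff ℝ 1 f) :
    IsHomogeneous n (fderiv ℝ f) := by
  have hdiff : Differentiable ℝ f := hf.differentiable one_ne_zero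
  refine isHomogeneous_of_ne_zero (hf.continuous_fderiv one_ne_zero) fun c hc x => ?_
  have hcomp : HasFDerivAt (fun y => f (c • y))
      ((_root_.fderiv ℝ f (c • x)).comp (c • ContinuousLinearMap.id ℝ E)) x :=
    (hdiff (c • x)).hasFDerivAt.comp x ((hasFDerivAt_id x).const_smul c)
  have hscal : HasFDerivAt (fun y => f (c • y)) (c ^ (n + 1) • _root_.fderiv ℝ f x) x := by
    simp_rw [hh c]
    exact (hdiff x).hasFDerivAt.const_smul _
  ext v
  have hv := congr($(hcomp.unique hscal) v)
  simp only [ContinuousLinearMap.comp_apply, smul_apply,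
    ContinuousLinearMap.id_apply, map_smul, pow_succ', mul_smul] at hv
  simpa using smul_right_injective F hc hv

lemma IsHomogeneous.eq_iteratedFDeriv (hh : IsHomogeneous n f) (hf : ContDiff ℝ n f) (x : E) :
    f x = (n.factorial : ℝ)⁻¹ • iteratedFDeriv ℝ n f 0 (fun _ => x) := by
  set g : ℝ →L[ℝ] E := ContinuousLinearMap.toSpanSingleton ℝ x
  have hline : f ∘ g = fun t => t ^ n • f x := funext fun t => hh t x
  have key : iteratedFDeriv ℝ n f 0 (fun _ => x) = (n.factorial : ℝ) • f x := by
    have h1 := g.iteratedFDeriv_comp_right hf 0 le_rfl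
    have h2 := congr($h1 (fun _ => 1))
    rw [hline] at h2
    simp only [g, map_zero, ContinuousMultilinearMap.compContinuousLinearMap_apply,
      ContinuousLinearMap.toSpanSingleton_apply, one_smul] at h2
    rw [← h2, ← iteratedDeriv_eq_iteratedFDeriv,
      iteratedDeriv_smul_const (contDiff_id.pow n).contDiffAt, iteratedDeriv_fun_pow_zero,
      if_pos rfl]
  rw [key, smul_smul, inv_mul_cancel₀ (by positivity), one_smul]

end Homogeneous

section Multilinear

variable {E F : Type*} [NormedAddCommGroup E] [NormedSpace ℝ E] [NormedAddCommGroup F]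
  [NormedSpace ℝ F] {n : ℕ} (M : ContinuousMultilinearMap ℝ (fun _ : Fin n => E) F)

lemma fderiv_multilinear_diag_apply (x v : E) :
    fderiv ℝ (fun y => M fun _ => y) x v =
      ∑ i, M fun j => if j < i then x else if i = j then v else x := by
  have hdiag : HasFDerivAt (fun y => M fun _ => y)
      (M.linearDeriv (fun _ => x) ∘L ContinuousLinearMap.pi fun _ => .id ℝ E) x :=
    (M.hasFDerivAt _).comp x (ContinuousLinearMap.pi fun _ => .id ℝ E).hasFDerivAt
  simp only [hdiag.fderiv, ContinuousLinearMap.comp_apply,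
    ContinuousMultilinearMap.linearDeriv_apply, ContinuousLinearMap.pi_apply,
    ContinuousLinearMap.id_apply]
  exact Finset.sum_congr rfl fun i _ =>
    congrArg M (funext fun j => by grind [Function.update_apply])

lemma multilinear_diag_sub_diag {x y v : E} {t : ℝ} (h : x - y = t • v) :
    ((M fun _ => x) - M fun _ => y) =
      t • ∑ i, M fun j => if j < i then x else if i = j then v else y := by
  have htel := M.toMultilinearMap.map_sub_map_piecewise (fun _ => x) (fun _ => y) Finset.univ
  simp only [Finset.piecewise_univ, Finset.mem_univ, true_implies,
    ContinuousMultilinearMap.coe_coe, h] at htel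
  rw [htel, Finset.smul_sum]
  refine Finset.sum_congr rfl fun i _ => ?_
  set slots := fun j => if j < i then x else if i = j then v else y
  rw [show (fun j => if j < i then x else if i = j then t • v else y) =
      Function.update slots i (t • v) from funext fun j => by grind [Function.update_apply],
    M.map_update_smul, Function.update_eq_self_iff.mpr (by simp [slots])]

end Multilinear

section DunklOperators

variable {n : ℕ}

def reflectL (a : Vd d) : Vd d →L[ℝ] Vd d :=
  ContinuousLinearMap.id ℝ (Vd d) - (2 / ⟪a, a⟫) • (innerSL ℝ a).smulRight a

lemma reflectL_apply (a x : Vd d) : reflectL a x = reflect a x := by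
  simp only [reflectL, reflect, sub_apply, ContinuousLinearMap.id_apply,
    smul_apply, ContinuousLinearMap.smulRight_apply, innerSL_apply_apply,
    smul_smul]
  congr 2
  ring

lemma reflect_smul (a x : Vd d) (c : ℝ) : reflect a (c • x) = c • reflect a x := by
  simp only [← reflectL_apply, map_smul]

lemma contDiff_reflect (a : Vd d) : ContDiff ℝ (⊤ : ℕ∞) (reflect a) := by
  rw [show reflect a = reflectL a from funext fun x => (reflectL_apply a x).symm]
  exact (reflectL a).contDiff

lemma reflect_of_inner_eq_zero {a x : Vd d} (h : ⟪a, x⟫ = 0) : reflect a x = x := by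
  simp [reflect, h]

lemma sub_reflect (a x : Vd d) : x - reflect a x = (2 * ⟪a, x⟫ / ⟪a, a⟫) • a := by
  simp [reflect]

lemma inner_smul_dQuot (a : Vd d) (f : Vd d → A) (x : Vd d) :
    ⟪a, x⟫ • dQuot a f x = f x - f (reflect a x) := by
  unfold dQuot
  split_ifs with h
  · simp [h, reflect_of_inner_eq_zero h]
  · rw [smul_smul, mul_inv_cancel₀ h, one_smul]

lemma dQuot_const (a : Vd d) (b : A) (x : Vd d) : dQuot a (fun _ => b) x = 0 := by
  unfold dQuot
  split_ifs <;> simp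

lemma dQuot_add (a : Vd d) {f g : Vd d → A} {x : Vd d} (hf : DifferentiableAt ℝ f x)
    (hg : DifferentiableAt ℝ g x) : dQuot a (fun y => f y + g y) x = dQuot a f x + dQuot a g x := by
  unfold dQuot
  split_ifs
  · rw [fderiv_fun_add hf hg, add_apply, smul_add]
  · rw [← smul_add, add_sub_add_comm]

lemma dQuot_sub (a : Vd d) {f g : Vd d → A} {x : Vd d} (hf : DifferentiableAt ℝ f x)
    (hg : DifferentiableAt ℝ g x) : dQuot a (fun y => f y - g y) x = dQuot a f x - dQuot a g x := by
  unfold dQuot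
  split_ifs
  · rw [fderiv_fun_sub hf hg, sub_apply, smul_sub]
  · rw [← smul_sub, sub_sub_sub_comm]

lemma dQuot_const_smul (a : Vd d) (r : ℝ) {f : Vd d → A} {x : Vd d} (hf : DifferentiableAt ℝ f x) :
    dQuot a (fun y => r • f y) x = r • dQuot a f x := by
  unfold dQuot
  split_ifs
  · rw [fderiv_fun_const_smul hf, smul_apply, smul_comm]
  · rw [← smul_sub, smul_comm]

lemma dunklT_const (S : DunklData d) (i : Fin d) (b : A) (x : Vd d) :
    dunklT S i (fun _ => b) x = 0 := by
  simp [dunklT, dQuot_const]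

lemma dunklT_add (S : DunklData d) (i : Fin d) {f g : Vd d → A} {x : Vd d}
    (hf : DifferentiableAt ℝ f x) (hg : DifferentiableAt ℝ g x) :
    dunklT S i (fun y => f y + g y) x = dunklT S i f x + dunklT S i g x := by
  simp only [dunklT, fderiv_fun_add hf hg, add_apply, dQuot_add _ hf hg, smul_add,
    Finset.sum_add_distrib]
  abel

lemma dunklT_sub (S : DunklData d) (i : Fin d) {f g : Vd d → A} {x : Vd d}
    (hf : DifferentiableAt ℝ f x) (hg : DifferentiableAt ℝ g x) :
    dunklT S i (fun y => f y - g y) x = dunklT S i f x - dunklT S i g x := by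
  simp only [dunklT, fderiv_fun_sub hf hg, sub_apply, dQuot_sub _ hf hg, smul_sub,
    Finset.sum_sub_distrib]
  abel

lemma dunklT_const_smul (S : DunklData d) (i : Fin d) (r : ℝ) {f : Vd d → A} {x : Vd d}
    (hf : DifferentiableAt ℝ f x) : dunklT S i (fun y => r • f y) x = r • dunklT S i f x := by
  simp only [dunklT, fderiv_fun_const_smul hf, smul_apply, dQuot_const_smul _ _ hf, smul_add,
    Finset.smul_sum, smul_comm r]

lemma diracD_const (e : Fin d → A) (S : DunklData d) (b : A) (x : Vd d) :
    diracD e S (fun _ => b) x = 0 := by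
  simp [diracD, dunklT_const]

lemma diracD_add (e : Fin d → A) (S : DunklData d) {f g : Vd d → A} {x : Vd d}
    (hf : DifferentiableAt ℝ f x) (hg : DifferentiableAt ℝ g x) :
    diracD e S (fun y => f y + g y) x = diracD e S f x + diracD e S g x := by
  simp only [diracD, dunklT_add S _ hf hg, mul_add, Finset.sum_add_distrib]

lemma diracD_sub (e : Fin d → A) (S : DunklData d) {f g : Vd d → A} {x : Vd d}
    (hf : DifferentiableAt ℝ f x) (hg : DifferentiableAt ℝ g x) :
    diracD e S (fun y => f y - g y) x = diracD e S f x - diracD e S g x := by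
  simp only [diracD, dunklT_sub S _ hf hg, mul_sub, Finset.sum_sub_distrib]

lemma diracD_const_smul (e : Fin d → A) (S : DunklData d) (r : ℝ) {f : Vd d → A} {x : Vd d}
    (hf : DifferentiableAt ℝ f x) : diracD e S (fun y => r • f y) x = r • diracD e S f x := by
  simp only [diracD, dunklT_const_smul S _ r hf, mul_smul_comm, Finset.smul_sum]

lemma diracD_sum {ι : Type*} (e : Fin d → A) (S : DunklData d) (s : Finset ι)
    {f : ι → Vd d → A} {x : Vd d} (hf : ∀ i ∈ s, DifferentiableAt ℝ (f i) x) :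
    diracD e S (fun y => ∑ i ∈ s, f i y) x = ∑ i ∈ s, diracD e S (f i) x := by
  classical
  induction s using Finset.induction_on with
  | empty => simpa using diracD_const e S 0 x
  | insert j s hj ih =>
    rw [Finset.forall_mem_insert] at hf
    simp only [Finset.sum_insert hj]
    rw [diracD_add e S hf.1 (DifferentiableAt.fun_sum hf.2), ih hf.2]

lemma sum_smul_dunklT (S : DunklData d) (f : Vd d → A) (x : Vd d) :
    ∑ i, x i • dunklT S i f x = fderiv ℝ f x x + ∑ α ∈ S.Rp, S.kap α • (f x - f (reflect α x)) := by
  have hderiv : ∑ i, x i • fderiv ℝ f x (EuclideanSpace.single i 1) = fderiv ℝ f x x := by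
    simp only [← map_smul, ← map_sum]
    congr 1
    simpa using (EuclideanSpace.basisFun (Fin d) ℝ).sum_repr x
  have hinner : ∀ α : Vd d, ∑ i, x i * (S.kap α * α i) = S.kap α * ⟪α, x⟫ := fun α => by
    simp only [PiLp.inner_apply, RCLike.inner_apply, conj_trivial, Finset.mul_sum]
    exact Finset.sum_congr rfl fun i _ => by ring
  simp only [dunklT, smul_add, Finset.sum_add_distrib, hderiv, Finset.smul_sum, smul_smul]
  rw [Finset.sum_comm]
  refine congrArg _ (Finset.sum_congr rfl fun α _ => ?_)
  rw [← Finset.sum_smul, hinner, mul_smul, inner_smul_dQuot]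

lemma dQuot_multilinear (a : Vd d) (M : ContinuousMultilinearMap ℝ (fun _ : Fin n => Vd d) A)
    (x : Vd d) :
    dQuot a (fun y => M fun _ => y) x = (2 / ⟪a, a⟫) •
      ∑ i, M fun j => if j < i then x else if i = j then a else reflect a x := by
  unfold dQuot
  split_ifs with h
  · rw [fderiv_multilinear_diag_apply, reflect_of_inner_eq_zero h]
  · rw [multilinear_diag_sub_diag M (sub_reflect a x), smul_smul]
    congr 1
    field_simp

lemma contDiff_dQuot_multilinear (a : Vd d)
    (M : ContinuousMultilinearMap ℝ (fun _ : Fin n => Vd d) A) :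
    ContDiff ℝ (⊤ : ℕ∞) (dQuot a fun y => M fun _ => y) := by
  rw [funext (dQuot_multilinear a M)]
  refine ContDiff.const_smul _
    (ContDiff.sum fun i _ => M.contDiff.comp (contDiff_pi.mpr fun j => ?_))
  by_cases hji : j < i
  · simp only [hji, if_true]
    exact contDiff_id
  by_cases hij : i = j
  · subst hij
    simp only [lt_irrefl, if_true, if_false]
    exact contDiff_const
  · simp only [hji, hij, if_false]
    exact contDiff_reflect a

lemma IsHomogeneous.contDiff_dQuot {f : Vd d → A} (hh : IsHomogeneous n f) (hf : ContDiff ℝ n f)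
    (a : Vd d) : ContDiff ℝ (⊤ : ℕ∞) (dQuot a f) := by
  rw [funext (hh.eq_iteratedFDeriv hf)]
  exact contDiff_dQuot_multilinear a ((n.factorial : ℝ)⁻¹ • iteratedFDeriv ℝ n f 0)

lemma IsHomogeneous.dQuot_smul {f : Vd d → A} (hh : IsHomogeneous (n + 1) f) (hf : ContDiff ℝ 1 f)
    (a : Vd d) {c : ℝ} (hc : c ≠ 0) (x : Vd d) : dQuot a f (c • x) = c ^ n • dQuot a f x := by
  have hinner : ⟪a, c • x⟫ = c * ⟪a, x⟫ := real_inner_smul_right a x c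
  unfold dQuot
  by_cases h : ⟪a, x⟫ = 0
  · rw [if_pos (by simp [hinner, h]), if_pos h, hh.fderiv hf c x, smul_apply, smul_comm]
  · rw [if_neg (by simp [hinner, h, hc]), if_neg h, reflect_smul, hh c, hh c, ← smul_sub, hinner,
      smul_smul, smul_smul]
    congr 1
    field_simp
    ring

lemma IsHomogeneous.contDiff_dunklT {f : Vd d → A} (hh : IsHomogeneous n f)
    (hf : ContDiff ℝ (⊤ : ℕ∞) f) (S : DunklData d) (i : Fin d) :
    ContDiff ℝ (⊤ : ℕ∞) (dunklT S i f) :=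
  ((hf.fderiv_right (m := (⊤ : ℕ∞)) (by simp)).clm_apply contDiff_const).add
    (ContDiff.sum fun a _ =>
      (hh.contDiff_dQuot (hf.of_le (by exact_mod_cast le_top)) a).const_smul _)

lemma IsHomogeneous.contDiff_diracD {f : Vd d → A} (hh : IsHomogeneous n f)
    (hf : ContDiff ℝ (⊤ : ℕ∞) f) (e : Fin d → A) (S : DunklData d) :
    ContDiff ℝ (⊤ : ℕ∞) (diracD e S f) :=
  ContDiff.sum fun i _ => contDiff_const.mul (hh.contDiff_dunklT hf S i)

lemma IsHomogeneous.dunklT_smul {f : Vd d → A} (hh : IsHomogeneous (n + 1) f)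
    (hf : ContDiff ℝ 1 f) (S : DunklData d) (i : Fin d) {c : ℝ} (hc : c ≠ 0) (x : Vd d) :
    dunklT S i f (c • x) = c ^ n • dunklT S i f x := by
  simp only [dunklT, hh.fderiv hf c x, smul_apply, hh.dQuot_smul hf _ hc, smul_add,
    Finset.smul_sum, smul_comm (c ^ n)]

lemma IsHomogeneous.diracD {f : Vd d → A} (hh : IsHomogeneous (n + 1) f)
    (hf : ContDiff ℝ (⊤ : ℕ∞) f) (e : Fin d → A) (S : DunklData d) :
    IsHomogeneous n (_root_.diracD e S f) :=
  isHomogeneous_of_ne_zero (hh.contDiff_diracD hf e S).continuous fun c hc x => by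
    simp only [_root_.diracD, hh.dunklT_smul (hf.of_le (by exact_mod_cast le_top)) S _ hc,
      mul_smul_comm, Finset.smul_sum]

end DunklOperators

section Clifford

def vecCL (e : Fin d → A) : Vd d →L[ℝ] A :=
  ∑ i, (EuclideanSpace.proj i : Vd d →L[ℝ] ℝ).smulRight (e i)

lemma vecCL_apply (e : Fin d → A) (x : Vd d) : vecCL e x = vecC e x := by
  simp [vecCL, vecC]

lemma vecC_smul (e : Fin d → A) (c : ℝ) (x : Vd d) : vecC e (c • x) = c • vecC e x := by
  simp only [← vecCL_apply, map_smul]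

lemma vecC_sub (e : Fin d → A) (x y : Vd d) : vecC e (x - y) = vecC e x - vecC e y := by
  simp only [← vecCL_apply, map_sub]

lemma vecC_single (e : Fin d → A) (i : Fin d) : vecC e (EuclideanSpace.single i 1) = e i := by
  simp [vecC]

lemma hasFDerivAt_vecC (e : Fin d → A) (x : Vd d) : HasFDerivAt (vecC e) (vecCL e) x := by
  rw [show vecC e = vecCL e from funext fun y => (vecCL_apply e y).symm]
  exact (vecCL e).hasFDerivAt

lemma contDiff_vecC (e : Fin d → A) : ContDiff ℝ (⊤ : ℕ∞) (vecC e) := by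
  rw [show vecC e = vecCL e from funext fun y => (vecCL_apply e y).symm]
  exact (vecCL e).contDiff

lemma sum_smul_mul (e : Fin d → A) (v : Vd d) (b : A) : ∑ i, v i • (e i * b) = vecC e v * b := by
  simp only [vecC, Finset.sum_mul, smul_mul_assoc]

variable {e : Fin d → A}

lemma mul_vecC_add_vecC_mul (he : ∀ i j, e i * e j + e j * e i = if i = j then (-2 : A) else 0)
    (i : Fin d) (x : Vd d) : e i * vecC e x + vecC e x * e i = (-2 * x i) • (1 : A) := by
  have hterm : ∀ j, e i * (x j • e j) + x j • e j * e i = x j • if i = j then (-2 : A) else 0 :=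
    fun j => by rw [mul_smul_comm, smul_mul_assoc, ← smul_add, he]
  rw [vecC, Finset.mul_sum, Finset.sum_mul, ← Finset.sum_add_distrib, Finset.sum_congr rfl
    fun j _ => hterm j]
  rw [Finset.sum_eq_single_of_mem i (Finset.mem_univ i) fun j _ hj => by simp [Ne.symm hj],
    if_pos rfl, mul_comm, mul_smul,
    ← Algebra.algebraMap_eq_smul_one, map_neg, map_ofNat]

lemma vecC_mul_self (he : ∀ i j, e i * e j + e j * e i = if i = j then (-2 : A) else 0)
    (x : Vd d) : vecC e x * vecC e x = -⟪x, x⟫ • (1 : A) := by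
  have hright : vecC e x * vecC e x = ∑ i, x i • (vecC e x * e i) :=
    calc vecC e x * vecC e x = vecC e x * ∑ i, x i • e i := rfl
      _ = ∑ i, x i • (vecC e x * e i) := by simp only [Finset.mul_sum, mul_smul_comm]
  have htwo : (2 : ℝ) • (vecC e x * vecC e x) = (-2 * ⟪x, x⟫) • (1 : A) := by
    rw [two_smul]
    nth_rw 1 [← sum_smul_mul e x (vecC e x)]
    rw [hright, ← Finset.sum_add_distrib]
    simp only [← smul_add, mul_vecC_add_vecC_mul he, smul_smul, ← Finset.sum_smul]
    congr 1
    simp only [PiLp.inner_apply, RCLike.inner_apply, conj_trivial, Finset.mul_sum]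
    exact Finset.sum_congr rfl fun i _ => by ring
  refine smul_right_injective A (two_ne_zero (α := ℝ)) ?_
  simp only [htwo, smul_smul]
  ring_nf

lemma mul_self_eq_neg_one (he : ∀ i j, e i * e j + e j * e i = if i = j then (-2 : A) else 0)
    (i : Fin d) : e i * e i = -1 := by
  have h := he i i
  rw [if_pos rfl] at h
  refine smul_right_injective A (two_ne_zero (α := ℝ)) ?_
  simp only
  rw [two_smul, h, smul_neg, two_smul, one_add_one_eq_two]

lemma fderiv_vecC_mul_apply {f : Vd d → A} {x : Vd d} (hf : DifferentiableAt ℝ f x) (v : Vd d) :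
    fderiv ℝ (fun y => vecC e y * f y) x v = vecC e x * fderiv ℝ f x v + vecC e v * f x := by
  rw [show (fun y => vecC e y * f y) = vecC e * f from rfl,
    ((hasFDerivAt_vecC e x).mul' hf.hasFDerivAt).fderiv]
  simp [vecCL_apply]

lemma contDiff_vecC_pow_mul {f : Vd d → A} (hf : ContDiff ℝ (⊤ : ℕ∞) f) (k : ℕ) :
    ContDiff ℝ (⊤ : ℕ∞) fun y => vecC e y ^ k * f y :=
  ((contDiff_vecC e).pow k).mul hf

lemma IsHomogeneous.vecC_pow_mul {m : ℕ} {f : Vd d → A} (hh : IsHomogeneous m f) (k : ℕ) :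
    IsHomogeneous (m + k) fun y => vecC e y ^ k * f y := fun c x => by
  dsimp only
  rw [vecC_smul, smul_pow, hh, smul_mul_smul_comm, ← pow_add, add_comm k]

lemma dQuot_vecC_mul (a : Vd d) {f : Vd d → A} {x : Vd d} (hf : DifferentiableAt ℝ f x) :
    dQuot a (fun y => vecC e y * f y) x =
      vecC e x * dQuot a f x + (2 / ⟪a, a⟫) • (vecC e a * f (reflect a x)) := by
  unfold dQuot
  split_ifs with h
  · rw [fderiv_vecC_mul_apply hf, reflect_of_inner_eq_zero h, smul_add, mul_smul_comm]
  · have hsplit : vecC e x * f x - vecC e (reflect a x) * f (reflect a x) =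
        vecC e x * (f x - f (reflect a x)) + vecC e (x - reflect a x) * f (reflect a x) := by
      rw [vecC_sub]
      noncomm_ring
    rw [hsplit, sub_reflect, vecC_smul, smul_add, mul_smul_comm, smul_mul_assoc, smul_smul]
    congr 2
    field_simp

lemma dunklT_vecC_mul (S : DunklData d) (i : Fin d) {f : Vd d → A} {x : Vd d}
    (hf : DifferentiableAt ℝ f x) :
    dunklT S i (fun y => vecC e y * f y) x = vecC e x * dunklT S i f x + e i * f x +
      ∑ α ∈ S.Rp, (S.kap α * α i * (2 / ⟪α, α⟫)) • (vecC e α * f (reflect α x)) := by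
  simp only [dunklT, fderiv_vecC_mul_apply hf, vecC_single, dQuot_vecC_mul _ hf, smul_add,
    Finset.sum_add_distrib, mul_add, Finset.mul_sum, mul_smul_comm, smul_smul]
  abel

lemma diracD_vecC_mul (he : ∀ i j, e i * e j + e j * e i = if i = j then (-2 : A) else 0)
    (S : DunklData d) {f : Vd d → A} {x : Vd d} (hf : DifferentiableAt ℝ f x) :
    diracD e S (fun y => vecC e y * f y) x =
      -((2 : ℝ) • fderiv ℝ f x x + dunklDim S • f x) - vecC e x * diracD e S f x := by
  have hanti : ∑ i, e i * (vecC e x * dunklT S i f x) =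
      (-2 : ℝ) • ∑ i, x i • dunklT S i f x - vecC e x * diracD e S f x := by
    simp only [diracD, Finset.mul_sum, Finset.smul_sum, ← Finset.sum_sub_distrib]
    refine Finset.sum_congr rfl fun i _ => ?_
    rw [← mul_assoc, ← mul_assoc, eq_sub_of_add_eq (mul_vecC_add_vecC_mul he i x), sub_mul,
      smul_mul_assoc, one_mul, smul_smul]
  have hsq : ∑ i, e i * (e i * f x) = -(d : ℝ) • f x := by
    simp only [← mul_assoc, mul_self_eq_neg_one he, neg_one_mul, Finset.sum_neg_distrib,
      Finset.sum_const, Finset.card_univ, Fintype.card_fin, neg_smul, Nat.cast_smul_eq_nsmul]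
  have hrefl : ∑ i, e i * ∑ α ∈ S.Rp, (S.kap α * α i * (2 / ⟪α, α⟫)) • (vecC e α * f (reflect α x))
      = (-2 : ℝ) • ∑ α ∈ S.Rp, S.kap α • f (reflect α x) := by
    simp only [Finset.mul_sum, mul_smul_comm, Finset.smul_sum]
    rw [Finset.sum_comm]
    refine Finset.sum_congr rfl fun α hα => ?_
    have hcoef : ∀ i, (S.kap α * α i * (2 / ⟪α, α⟫)) • (e i * (vecC e α * f (reflect α x))) =
        (S.kap α * (2 / ⟪α, α⟫)) • (α i • (e i * (vecC e α * f (reflect α x)))) :=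
      fun i => by rw [smul_smul]; ring_nf
    rw [Finset.sum_congr rfl fun i _ => hcoef i, ← Finset.smul_sum, sum_smul_mul, ← mul_assoc,
      vecC_mul_self he, smul_mul_assoc, one_mul, smul_smul, smul_smul]
    have hα' := S.inner_self_ne_zero hα
    generalize ⟪α, α⟫ = s at hα' ⊢
    congr 1
    field_simp
  simp only [diracD, dunklT_vecC_mul S _ hf, mul_add, Finset.sum_add_distrib, hanti, hsq, hrefl,
    sum_smul_dunklT, dunklDim, gam, smul_sub, Finset.sum_sub_distrib, ← Finset.sum_smul]
  module

lemma IsHomogeneous.diracD_vecC_mul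
    (he : ∀ i j, e i * e j + e j * e i = if i = j then (-2 : A) else 0) (S : DunklData d)
    {m : ℕ} {f : Vd d → A} (hh : IsHomogeneous m f) {x : Vd d} (hf : DifferentiableAt ℝ f x) :
    _root_.diracD e S (fun y => vecC e y * f y) x =
      -((2 * m + dunklDim S) • f x) - vecC e x * _root_.diracD e S f x := by
  rw [AlmasiFischer.diracD_vecC_mul he S hf, hh.fderiv_apply_self hf]
  module

/-- The closed form of `c_0 = 0`, `c_{k+1} = -(2(m + k) + μ) - c_k`, the coefficient in
`D̲(x̲^k Q) = c_k x̲^(k-1) Q` for `Q ∈ M(m)`. -/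
def fischerCoeff (S : DunklData d) (m k : ℕ) : ℝ :=
  if Even k then -(k : ℝ) else -(2 * m + (k - 1 : ℝ) + dunklDim S)

lemma fischerCoeff_zero (S : DunklData d) (m : ℕ) : fischerCoeff S m 0 = 0 := by
  simp [fischerCoeff]

lemma fischerCoeff_succ (S : DunklData d) (m k : ℕ) :
    fischerCoeff S m (k + 1) = -(2 * (m + k : ℝ) + dunklDim S) - fischerCoeff S m k := by
  unfold fischerCoeff
  rcases Nat.even_or_odd k with hk | hk
  · rw [if_neg (by simpa [Nat.even_add_one] using hk), if_pos hk]
    push_cast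
    ring
  · rw [if_pos (Nat.even_add_one.mpr (Nat.not_even_iff_odd.mpr hk)),
      if_neg (Nat.not_even_iff_odd.mpr hk)]
    push_cast
    ring

lemma fischerCoeff_succ_ne_zero (S : DunklData d) (hμ : 0 < dunklDim S) (m k : ℕ) :
    fischerCoeff S m (k + 1) ≠ 0 := by
  unfold fischerCoeff
  split_ifs
  · push_cast
    linarith
  · push_cast
    linarith

/-- `f ∈ M(m)`. -/
def IsHomogeneousMonogenic (e : Fin d → A) (S : DunklData d) (m : ℕ) (f : Vd d → A) : Prop :=
  ContDiff ℝ (⊤ : ℕ∞) f ∧ IsHomogeneous m f ∧ ∀ x, diracD e S f x = 0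

lemma IsHomogeneousMonogenic.sub {S : DunklData d} {m : ℕ} {f g : Vd d → A}
    (hf : IsHomogeneousMonogenic e S m f) (hg : IsHomogeneousMonogenic e S m g) :
    IsHomogeneousMonogenic e S m fun y => f y - g y :=
  ⟨hf.1.sub hg.1, hf.2.1.sub hg.2.1, fun x => by
    rw [diracD_sub e S (hf.1.differentiable (by simp) x) (hg.1.differentiable (by simp) x),
      hf.2.2 x, hg.2.2 x, sub_zero]⟩

lemma IsHomogeneousMonogenic.const_smul {S : DunklData d} {m : ℕ} {f : Vd d → A}
    (hf : IsHomogeneousMonogenic e S m f) (r : ℝ) :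
    IsHomogeneousMonogenic e S m fun y => r • f y :=
  ⟨hf.1.const_smul r, hf.2.1.const_smul r, fun x => by
    rw [diracD_const_smul e S r (hf.1.differentiable (by simp) x), hf.2.2 x, smul_zero]⟩

lemma diracD_vecC_pow_succ_mul (he : ∀ i j, e i * e j + e j * e i = if i = j then (-2 : A) else 0)
    {S : DunklData d} {m : ℕ} {Q : Vd d → A} (hQ : IsHomogeneousMonogenic e S m Q) (k : ℕ)
    (x : Vd d) : diracD e S (fun y => vecC e y ^ (k + 1) * Q y) x =
      fischerCoeff S m (k + 1) • (vecC e x ^ k * Q x) := by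
  induction k generalizing x with
  | zero =>
    simp only [zero_add, pow_one, pow_zero, one_mul]
    rw [hQ.2.1.diracD_vecC_mul he S (hQ.1.differentiable (by simp) x), hQ.2.2 x, mul_zero,
      sub_zero, fischerCoeff_succ, fischerCoeff_zero]
    push_cast
    module
  | succ k ih =>
    have hpow : (fun y => vecC e y ^ (k + 1 + 1) * Q y) =
        fun y => vecC e y * (vecC e y ^ (k + 1) * Q y) :=
      funext fun y => by rw [pow_succ', mul_assoc]
    rw [hpow, (hQ.2.1.vecC_pow_mul (k + 1)).diracD_vecC_mul he S
      ((contDiff_vecC_pow_mul hQ.1 _).differentiable (by simp) x), ih,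
      fischerCoeff_succ S m (k + 1), mul_smul_comm, ← mul_assoc, ← pow_succ']
    push_cast
    module

lemma diracD_sum_vecC_pow_mul
    (he : ∀ i j, e i * e j + e j * e i = if i = j then (-2 : A) else 0) {S : DunklData d}
    {n : ℕ} {Q : Fin (n + 2) → Vd d → A}
    (hQ : ∀ k : Fin (n + 2), IsHomogeneousMonogenic e S (n + 1 - k) (Q k)) (x : Vd d) :
    diracD e S (fun y => ∑ k : Fin (n + 2), vecC e y ^ (k : ℕ) * Q k y) x =
      ∑ k : Fin (n + 1), vecC e x ^ (k : ℕ) * (fischerCoeff S (n - k) (k + 1) • Q k.succ x) := by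
  rw [diracD_sum e S _ fun k _ => (contDiff_vecC_pow_mul (hQ k).1 _).differentiable (by simp) x,
    Fin.sum_univ_succ]
  simp only [Fin.val_zero, pow_zero, one_mul, (hQ 0).2.2 x, zero_add, Fin.val_succ]
  refine Finset.sum_congr rfl fun k _ => ?_
  have hk : IsHomogeneousMonogenic e S (n - k) (Q k.succ) := by
    simpa [Fin.val_succ] using hQ k.succ
  rw [diracD_vecC_pow_succ_mul he hk, mul_smul_comm]

theorem eq_zero_of_sum_vecC_pow_mul_eq_zero
    (he : ∀ i j, e i * e j + e j * e i = if i = j then (-2 : A) else 0) {S : DunklData d}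
    (hμ : 0 < dunklDim S) {n : ℕ} {Q : Fin (n + 1) → Vd d → A}
    (hQ : ∀ k : Fin (n + 1), IsHomogeneousMonogenic e S (n - k) (Q k))
    (hsum : ∀ x, ∑ k : Fin (n + 1), vecC e x ^ (k : ℕ) * Q k x = 0) : Q = 0 := by
  induction n with
  | zero =>
    funext k x
    simpa [Fin.fin_one_eq_zero k] using hsum x
  | succ n ih =>
    have htail : ∀ k : Fin (n + 1), Q k.succ = 0 := by
      have hk : ∀ k : Fin (n + 1), IsHomogeneousMonogenic e S (n - k) (Q k.succ) := fun k => by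
        simpa [Fin.val_succ] using hQ k.succ
      have hzero := ih (fun k => (hk k).const_smul (fischerCoeff S (n - k) (k + 1))) fun x => by
        rw [← diracD_sum_vecC_pow_mul he hQ x, funext hsum, diracD_const]
      intro k
      funext x
      simpa [fischerCoeff_succ_ne_zero S hμ] using congrFun (congrFun hzero k) x
    funext k x
    refine Fin.cases ?_ (fun k => by simp [htail k]) k
    simpa [Fin.sum_univ_succ, htail] using hsum x

lemma isHomogeneousMonogenic_sub_sum
    (he : ∀ i j, e i * e j + e j * e i = if i = j then (-2 : A) else 0) {S : DunklData d}
    (hμ : 0 < dunklDim S) {n : ℕ} {P : Vd d → A} (hP : ContDiff ℝ (⊤ : ℕ∞) P)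
    (hhom : IsHomogeneous (n + 1) P) {q : Fin (n + 1) → Vd d → A}
    (hq : ∀ k : Fin (n + 1), IsHomogeneousMonogenic e S (n - k) (q k))
    (hDP : ∀ x, diracD e S P x = ∑ k : Fin (n + 1), vecC e x ^ (k : ℕ) * q k x) :
    IsHomogeneousMonogenic e S (n + 1) fun x => P x -
      ∑ k : Fin (n + 1), vecC e x ^ ((k : ℕ) + 1) * (fischerCoeff S (n - k) (k + 1))⁻¹ • q k x := by
  have hR : ∀ k : Fin (n + 1), IsHomogeneousMonogenic e S (n - k)
      fun y => (fischerCoeff S (n - k) (k + 1))⁻¹ • q k y := fun k => (hq k).const_smul _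
  have hterms : ∀ k : Fin (n + 1), IsHomogeneous (n + 1)
      fun y => vecC e y ^ ((k : ℕ) + 1) * (fischerCoeff S (n - k) (k + 1))⁻¹ • q k y := fun k => by
    have h := (hR k).2.1.vecC_pow_mul (e := e) ((k : ℕ) + 1)
    rwa [show n - k + (k + 1) = n + 1 by have := k.isLt; omega] at h
  have hsmooth : ContDiff ℝ (⊤ : ℕ∞) fun y => ∑ k : Fin (n + 1),
      vecC e y ^ ((k : ℕ) + 1) * (fischerCoeff S (n - k) (k + 1))⁻¹ • q k y :=
    ContDiff.sum fun k _ => contDiff_vecC_pow_mul (hR k).1 _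
  refine ⟨hP.sub hsmooth, hhom.sub (isHomogeneous_sum _ fun k _ => hterms k), fun x => ?_⟩
  rw [diracD_sub e S (hP.differentiable (by simp) x) (hsmooth.differentiable (by simp) x),
    diracD_sum e S _ fun k _ => (contDiff_vecC_pow_mul (hR k).1 _).differentiable (by simp) x,
    hDP x, ← Finset.sum_sub_distrib]
  refine Finset.sum_eq_zero fun k _ => ?_
  rw [diracD_vecC_pow_succ_mul he (hR k), mul_smul_comm, smul_smul,
    mul_inv_cancel₀ (fischerCoeff_succ_ne_zero S hμ _ _), one_smul, sub_self]

theorem exists_sum_vecC_pow_mul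
    (he : ∀ i j, e i * e j + e j * e i = if i = j then (-2 : A) else 0) {S : DunklData d}
    (hμ : 0 < dunklDim S) {n : ℕ} {P : Vd d → A} (hP : ContDiff ℝ (⊤ : ℕ∞) P)
    (hhom : IsHomogeneous n P) :
    ∃ Q : Fin (n + 1) → Vd d → A, (∀ k : Fin (n + 1), IsHomogeneousMonogenic e S (n - k) (Q k)) ∧
      ∀ x, P x = ∑ k : Fin (n + 1), vecC e x ^ (k : ℕ) * Q k x := by
  induction n generalizing P with
  | zero =>
    have hconst : P = fun _ => P 0 := funext fun x => by simpa using (hhom 0 x).symm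
    refine ⟨fun _ => P, fun k => ⟨hP, by rwa [Nat.zero_sub], fun x => ?_⟩, fun x => by simp⟩
    rw [hconst]
    exact diracD_const e S (P 0) x
  | succ n ih =>
    obtain ⟨q, hq, hDP⟩ := ih (hhom.contDiff_diracD hP e S) (hhom.diracD hP e S)
    refine ⟨Fin.cases _ fun k y => (fischerCoeff S (n - k) (k + 1))⁻¹ • q k y,
      fun k => Fin.cases (isHomogeneousMonogenic_sub_sum he hμ hP hhom hq hDP)
        (fun k => by simpa using (hq k).const_smul _) k, fun x => ?_⟩
    simp [Fin.sum_univ_succ, pow_succ]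

end Clifford

end AlmasiFischer

open AlmasiFischer in
/-- Theorem 4.2 (Almasi–Fischer decomposition): every `ℝ_{0,d}`-valued homogeneous
polynomial `P` of degree `n` on `ℝ^d` (encoded as a smooth function that is homogeneous of
degree `n`) decomposes uniquely as `P = Σ_{k=0}^n x̲^k Q_k` with each `Q_k` a homogeneous
Dunkl-monogenic polynomial of degree `n − k`. -/
theorem almasi_fischer_decomposition (d : ℕ) (A : Type*) [NormedRing A] [NormedAlgebra ℝ A]
    (e : Fin d → A) (he : CliffordRel e) (S : DunklData d) (hγ : 0 < gam S)
    (n : ℕ) (P : Vd d → A) (hP : ContDiff ℝ (⊤ : ℕ∞) P)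
    (hhom : ∀ (c : ℝ) (x : Vd d), P (c • x) = (c ^ n) • P x) :
    ∃! Q : Fin (n + 1) → (Vd d → A),
      (∀ k : Fin (n + 1), ContDiff ℝ (⊤ : ℕ∞) (Q k)
        ∧ (∀ (c : ℝ) (x : Vd d), Q k (c • x) = (c ^ (n - (k : ℕ))) • Q k x)
        ∧ (∀ x : Vd d, diracD e S (Q k) x = 0))
      ∧ (∀ x : Vd d, P x = ∑ k : Fin (n + 1), vecC e x ^ (k : ℕ) * Q k x) := by
  have hμ : 0 < dunklDim S := by
    unfold dunklDim
    positivity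
  obtain ⟨Q, hQ, hPQ⟩ := exists_sum_vecC_pow_mul he.1 hμ hP hhom
  refine ⟨Q, ⟨hQ, hPQ⟩, fun Q' ⟨hQ', hPQ'⟩ => ?_⟩
  have hdiff := eq_zero_of_sum_vecC_pow_mul_eq_zero he.1 hμ (Q := Q' - Q)
    (fun k => IsHomogeneousMonogenic.sub (hQ' k) (hQ k)) fun x => by
      simp only [Pi.sub_apply, mul_sub, Finset.sum_sub_distrib, ← hPQ x, ← hPQ' x, sub_self]
  exact sub_eq_zero.mp hdiff
end
end
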